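/- The arithmetic base 𝒜 does not support absurdity: it is not the case that ⊩_𝒜 ⊥; that is, there exists an atomic formula (e.g. S(0) = 0) that is not derivable in 𝒜. -/

import Mathlib

/-- Closed terms of arithmetic: generated from 0 by successor S, + and ·. -/
inductive Term : Type
  | zero : Term
  | S : Term → Term
  | add : Term → Term → Term
  | mul : Term → Term → Term

/-- The numeral n̄ = Sⁿ(0). -/
def numeral : ℕ → Term
  | 0 => Term.zero
  | n + 1 => Term.S (numeral n)

/-- Atomic formulas: equations t = s between closed terms. -/
abbrev Atom : Type := Term × Term

/-- The weight function on closed terms. -/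
def w : Term → ℕ
  | .zero => 0
  | .S t => w t + 1
  | .add t s => w t + w s
  | .mul t s => w t * w s

/-- An atomic rule: finitely many atomic premises and an atomic conclusion. -/
structure Rule : Type where
  prems : List Atom
  concl : Atom

/-- A base is a set of atomic rules. -/
abbrev Base : Type := Set Rule

/-- Derivability of an atom in a base, by composing the rules of the base. -/
inductive Deriv (B : Base) : Atom → Prop
  | step (r : Rule) (hr : r ∈ B) (hp : ∀ a ∈ r.prems, Deriv B a) : Deriv B r.concl

/-- The rules of the arithmetic base 𝒜. -/
inductive ARule : Rule → Prop
  | eq1 (t : Term) : ARule ⟨[], (t, t)⟩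
  | eq2 (t s : Term) : ARule ⟨[(t, s)], (s, t)⟩
  | eq3 (t s u : Term) : ARule ⟨[(t, s), (s, u)], (t, u)⟩
  | pa1 (t : Term) (a : Atom) : ARule ⟨[(Term.S t, Term.zero)], a⟩
  | pa2 (t s : Term) : ARule ⟨[(Term.S t, Term.S s)], (t, s)⟩
  | pa3 (t : Term) : ARule ⟨[], (Term.add t Term.zero, t)⟩
  | pa4 (t s : Term) : ARule ⟨[], (Term.add t (Term.S s), Term.S (Term.add t s))⟩
  | pa5 (t : Term) : ARule ⟨[], (Term.mul t Term.zero, Term.zero)⟩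
  | pa6 (t s : Term) : ARule ⟨[], (Term.mul t (Term.S s), Term.add (Term.mul t s) t)⟩

/-- The arithmetic base 𝒜. -/
def ABase : Base := { r | ARule r }

/-- Closed formulas: atoms, ⊥, implication, and universal quantification
(a quantified formula is given by its family of closed instances). -/
inductive Formula : Type
  | atom : Atom → Formula
  | bot : Formula
  | imp : Formula → Formula → Formula
  | all : (Term → Formula) → Formula

/-- Sandqvist's support relation ⊩_B φ. -/
def Supports (B : Base) : Formula → Prop
  | .atom a => Deriv B a
  | .bot => ∀ a : Atom, Deriv B a
  | .imp φ ψ => ∀ C : Base, B ⊆ C → Supports C φ → Supports C ψ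
  | .all f => ∀ t : Term, Supports B (f t)

/-- Δ ⊩_B φ : for every base C ⊇ B, if C supports every member of Δ then C supports φ. -/
def FinSupports (B : Base) (Δ : Set Formula) (φ : Formula) : Prop :=
  ∀ C : Base, B ⊆ C → (∀ ψ ∈ Δ, Supports C ψ) → Supports C φ

/-- Γ ⊩ φ : Δ ⊩_∅ φ for some finite Δ ⊆ Γ. -/
def Supp (Γ : Set Formula) (φ : Formula) : Prop :=
  ∃ Δ : Set Formula, Δ.Finite ∧ Δ ⊆ Γ ∧ FinSupports ∅ Δ φ

/-! Interpreting closed terms in `ℕ` via the weight `w` is a model of `𝒜`: every rule is sound,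
the premise `S t = 0` of (PA1) being never true there. Since `w (S 0) = 1 ≠ 0 = w 0`, the atom
`S 0 = 0` is not derivable. -/

def Atom.HoldsInNat (a : Atom) : Prop := w a.1 = w a.2

theorem Deriv.rec_of_preserved {B : Base} {P : Atom → Prop}
    (hB : ∀ r ∈ B, (∀ a ∈ r.prems, P a) → P r.concl) {a : Atom} (ha : Deriv B a) : P a := by
  induction ha with
  | step r hr _ ih => exact hB r hr ih

theorem ARule.holdsInNat {r : Rule} (hr : ARule r) (hprems : ∀ a ∈ r.prems, a.HoldsInNat) :
    r.concl.HoldsInNat := by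
  cases hr with
  | eq1 t => rfl
  | eq2 t s => exact (hprems (t, s) (by simp)).symm
  | eq3 t s u => exact (hprems (t, s) (by simp)).trans (hprems (s, u) (by simp))
  | pa1 t a => exact absurd (hprems (.S t, .zero) (by simp)) (by simp [Atom.HoldsInNat, w])
  | pa2 t s => simpa [Atom.HoldsInNat, w] using hprems (.S t, .S s) (by simp)
  | pa3 t => simp [Atom.HoldsInNat, w]
  | pa4 t s => simp only [Atom.HoldsInNat, w]; ring
  | pa5 t => simp [Atom.HoldsInNat, w]
  | pa6 t s => simp only [Atom.HoldsInNat, w]; ring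

theorem Deriv.holdsInNat_of_ABase {a : Atom} (ha : Deriv ABase a) : a.HoldsInNat :=
  ha.rec_of_preserved fun _ hr => ARule.holdsInNat hr

/-- 𝒜 does not support ⊥; that is, some atomic formula
(e.g. S(0) = 0) is not derivable in 𝒜. -/
theorem ABase_not_bot :
    ¬ Supports ABase Formula.bot ∧
    ¬ Deriv ABase (Term.S Term.zero, Term.zero) := by
  have not_deriv : ¬ Deriv ABase (Term.S Term.zero, Term.zero) := fun h => by
    simpa [Atom.HoldsInNat, w] using h.holdsInNat_of_ABase
  exact ⟨fun hbot => not_deriv (hbot _), not_deriv⟩
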